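/- Norm of the pruned graph away from high-degree stars (deterministic). With A^p the adjacency matrix of the pruned graph G^p and v_σ(x) as defined, one has ‖ A^p − Σ_{x ∈ V_ν^(h)} Σ_{σ ∈ {±1}} σ √(D_x^{p−}) v_σ(x) v_σ(x)^* ‖ ≤ 2 √(ξ_ν). (The matrix inside the norm is the adjacency matrix of the subgraph of G^p induced on the complement of V_ν^(h), which is a forest with all degrees bounded by ξ_ν.) -/
import Mathlib


open MeasureTheory Real

namespace GRG

variable {N : ℕ}

/-! ### Generic graph-theoretic definitions over an adjacency relation on `Fin N` -/

/-- The degree of a vertex with respect to an adjacency relation. -/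
noncomputable def degA (A : Fin N → Fin N → Prop) (x : Fin N) : ℕ :=
  {y | A x y}.ncard

/-- The strict total order `≺`: `x ≺ y` iff `D_x < D_y`, or `D_x = D_y` and `x > y`. -/
def precA (A : Fin N → Fin N → Prop) (x y : Fin N) : Prop :=
  degA A x < degA A y ∨ (degA A x = degA A y ∧ y < x)

/-- `γ 0, γ 1, …, γ l` is a path for the adjacency relation `A`. -/
def IsPathOn (A : Fin N → Fin N → Prop) (l : ℕ) (γ : ℕ → Fin N) : Prop :=
  ∀ i < l, A (γ i) (γ (i + 1))

/-- A path of length `l` is simple: all vertices distinct except possibly endpoints. -/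
def IsSimplePath (l : ℕ) (γ : ℕ → Fin N) : Prop :=
  ∀ i j, i < j → j ≤ l → ¬(i = 0 ∧ j = l) → γ i ≠ γ j

/-- Two paths are edge-disjoint. -/
def EdgeDisjoint (l l' : ℕ) (γ γ' : ℕ → Fin N) : Prop :=
  ∀ i < l, ∀ j < l',
    ¬((γ i = γ' j ∧ γ (i + 1) = γ' (j + 1)) ∨ (γ i = γ' (j + 1) ∧ γ (i + 1) = γ' j))

/-- `S_1^cyc(x)`: neighbours of `x` that start a simple cycle through `x`
of length at most `2r+1`. -/
def S1cycA (A : Fin N → Fin N → Prop) (r : ℕ) (x : Fin N) : Set (Fin N) :=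
  {y | A x y ∧ ∃ l γ, 3 ≤ l ∧ l ≤ 2 * r + 1 ∧ γ 0 = x ∧ γ 1 = y ∧ γ l = x ∧
    IsPathOn A l γ ∧ IsSimplePath l γ}

/-- `S_1^du(x)`: neighbours `y ∉ S_1^cyc(x)` of `x` that have a neighbour
`z ∉ S_1^cyc(y)` with `y ≺ x ≺ z`. -/
def S1duA (A : Fin N → Fin N → Prop) (r : ℕ) (x : Fin N) : Set (Fin N) :=
  {y | A x y ∧ y ∉ S1cycA A r x ∧ precA A y x ∧
    ∃ z, A y z ∧ z ∉ S1cycA A r y ∧ precA A x z}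

/-- Adjacency in the graph `G^nc` (after removing the cycle-creating edges). -/
def AdjNCA (A : Fin N → Fin N → Prop) (r : ℕ) (x y : Fin N) : Prop :=
  A x y ∧ y ∉ S1cycA A r x ∧ x ∉ S1cycA A r y

/-- Adjacency in the pruned graph `G^p` (after further removing the down-up edges). -/
def AdjPA (A : Fin N → Fin N → Prop) (r : ℕ) (x y : Fin N) : Prop :=
  AdjNCA A r x y ∧ y ∉ S1duA A r x ∧ x ∉ S1duA A r y

/-- Degree in the pruned graph. -/
noncomputable def degPA (A : Fin N → Fin N → Prop) (r : ℕ) (x : Fin N) : ℕ :=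
  {y | AdjPA A r x y}.ncard

/-- `S_1^{p−}(x)`: pruned-graph neighbours of `x` that are smaller than `x` for `≺`. -/
def S1pmA (A : Fin N → Fin N → Prop) (r : ℕ) (x : Fin N) : Set (Fin N) :=
  {y | AdjPA A r x y ∧ precA A y x}

/-- `D_x^{p−}`. -/
noncomputable def degPmA (A : Fin N → Fin N → Prop) (r : ℕ) (x : Fin N) : ℕ :=
  (S1pmA A r x).ncard

/-- `Sib^−(x)`: the smaller siblings of `x` (children of the parent of `x`
that are smaller than `x`). -/
def SibmA (A : Fin N → Fin N → Prop) (r : ℕ) (x : Fin N) : Set (Fin N) :=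
  {y | ∃ p, AdjPA A r x p ∧ precA A x p ∧ AdjPA A r p y ∧ precA A y p ∧ precA A y x}

/-- The normalization constant `Z_x` (note `2/0 = 0` in Lean, so this agrees with the
convention `Z_x = 2` when `Sib^−(x) = ∅`). -/
noncomputable def ZxA (A : Fin N → Fin N → Prop) (r : ℕ) (x : Fin N) : ℝ :=
  2 + 2 / (SibmA A r x).ncard

/-- The indicator vector of a set of vertices. -/
noncomputable def indVec (S : Set (Fin N)) : Fin N → ℝ :=
  S.indicator 1

/-- The approximate eigenvector `u_σ(x)`. -/
noncomputable def uVecA (A : Fin N → Fin N → Prop) (r : ℕ) (σ : ℝ) (x : Fin N) :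
    Fin N → ℝ := fun y =>
  (Real.sqrt (ZxA A r x))⁻¹ *
    (indVec {x} y + σ * (Real.sqrt (degPmA A r x))⁻¹ * indVec (S1pmA A r x) y -
      indVec (SibmA A r x) y / (SibmA A r x).ncard)

/-- The star vector `v_σ(x)`. -/
noncomputable def vVecA (A : Fin N → Fin N → Prop) (r : ℕ) (σ : ℝ) (x : Fin N) :
    Fin N → ℝ := fun y =>
  (Real.sqrt 2)⁻¹ *
    (indVec {x} y + σ * (Real.sqrt (degPmA A r x))⁻¹ * indVec (S1pmA A r x) y)

/-- Euclidean scalar product on `ℝ^N`. -/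
noncomputable def dotR (f g : Fin N → ℝ) : ℝ := ∑ y, f y * g y

/-- The Euclidean (`ℓ² → ℓ²`) operator norm of an `N × N` real matrix. -/
noncomputable def opNorm (M : Matrix (Fin N) (Fin N) ℝ) : ℝ :=
  ‖Matrix.toEuclideanCLM (𝕜 := ℝ) M‖

open Classical in
/-- The adjacency matrix of the pruned graph. -/
noncomputable def adjMatrixPA (A : Fin N → Fin N → Prop) (r : ℕ) :
    Matrix (Fin N) (Fin N) ℝ := fun x y => if AdjPA A r x y then 1 else 0

/-- The threshold `ξ_ν`. -/
noncomputable def xi (ν δ : ℝ) (N : ℕ) : ℝ :=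
  3 * (ν + 1) * (2 - 3 * δ) / ((1 - δ) * (1 - 2 * δ)) *
    (Real.log N / Real.log (Real.log N))

/-- The set `V_ν^{(h)}` of high-degree vertices. -/
def VhA (A : Fin N → Fin N → Prop) (ν δ : ℝ) : Set (Fin N) :=
  {x | xi ν δ N ≤ (degA A x : ℝ)}

/-- The projection `Π^p` onto the span of the vectors `u_σ(x)`, `x ∈ V_ν^{(h)}`. -/
noncomputable def PiPA (A : Fin N → Fin N → Prop) (r : ℕ) (ν δ : ℝ) :
    Matrix (Fin N) (Fin N) ℝ :=
  ∑ x : Fin N, Set.indicator (VhA A ν δ) (fun _ => (1 : ℝ)) x •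
    (Matrix.vecMulVec (uVecA A r 1 x) (uVecA A r 1 x) +
      Matrix.vecMulVec (uVecA A r (-1) x) (uVecA A r (-1) x))

/-- The block-diagonal approximation `Â`. -/
noncomputable def AhatA (A : Fin N → Fin N → Prop) (r : ℕ) (ν δ : ℝ) :
    Matrix (Fin N) (Fin N) ℝ :=
  (∑ x : Fin N, Set.indicator (VhA A ν δ) (fun _ => (1 : ℝ)) x •
    (Real.sqrt (degPmA A r x) •
      (Matrix.vecMulVec (uVecA A r 1 x) (uVecA A r 1 x) -
        Matrix.vecMulVec (uVecA A r (-1) x) (uVecA A r (-1) x)))) +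
  (1 - PiPA A r ν δ) * adjMatrixPA A r * (1 - PiPA A r ν δ)

/-! ### The generalized random graph (GRG) model -/

/-- Index set of potential edges. -/
abbrev EdgeIdx (N : ℕ) := {p : Fin N × Fin N // p.1 < p.2}

/-- The edge probabilities `p_{xy} = w_x w_y / (Σ_z w_z + w_x w_y)`. -/
noncomputable def pGRG (w : Fin N → ℝ) (x y : Fin N) : ℝ :=
  w x * w y / ((∑ z, w z) + w x * w y)

/-- Bernoulli measure with parameter `p` on `Bool`. -/
noncomputable def bern (p : ℝ) : Measure Bool :=
  ENNReal.ofReal p • Measure.dirac true + ENNReal.ofReal (1 - p) • Measure.dirac false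

instance (p : ℝ) : IsFiniteMeasure (bern p) := by
  constructor
  simp only [bern, Measure.coe_add, Measure.coe_smul, Pi.add_apply, Pi.smul_apply,
    smul_eq_mul, measure_univ, mul_one]
  exact ENNReal.add_lt_top.mpr ⟨ENNReal.ofReal_lt_top, ENNReal.ofReal_lt_top⟩

/-- The law of the GRG: independent Bernoulli edge indicators. -/
noncomputable def grgMeasure (w : Fin N → ℝ) : Measure (EdgeIdx N → Bool) :=
  Measure.pi fun e => bern (pGRG w e.val.1 e.val.2)

/-- The (random) adjacency matrix. -/
noncomputable def adjMatrix (ω : EdgeIdx N → Bool) : Matrix (Fin N) (Fin N) ℝ :=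
  fun x y =>
    if h : x < y then (if ω ⟨(x, y), h⟩ then 1 else 0)
    else if h' : y < x then (if ω ⟨(y, x), h'⟩ then 1 else 0)
    else 0

/-- The (random) adjacency relation. -/
def Adj (ω : EdgeIdx N → Bool) (x y : Fin N) : Prop := adjMatrix ω x y = 1

/-- The (random) degree `D_x`. -/
noncomputable def deg (ω : EdgeIdx N → Bool) (x : Fin N) : ℕ := degA (Adj ω) x

/-- The first empirical moment `m_1`. -/
noncomputable def m1 (w : Fin N → ℝ) : ℝ := (∑ x, w x) / N

/-- The second empirical moment `m_2`. -/
noncomputable def m2 (w : Fin N → ℝ) : ℝ := (∑ x, w x ^ 2) / N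

/-- The expected degree `d_x = E[D_x]`. -/
noncomputable def dExp (w : Fin N → ℝ) (x : Fin N) : ℝ :=
  ∫ ω, (deg ω x : ℝ) ∂(grgMeasure w)

/-- The set `W_{λ,η}` of resonant vertices. -/
def resonant (ω : EdgeIdx N → Bool) (lam η : ℝ) : Set (Fin N) :=
  {x | |Real.sqrt (deg ω x) - lam| ≤ η}

/-- The set `V*_{ν,η}` of isolated vertices. -/
noncomputable def Vstar (w : Fin N → ℝ) (ν η : ℝ) : Set (Fin N) :=
  {x | (4 * ν / 9) * Real.log N ≤ dExp w x ∧
    ∀ y, y ≠ x →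
      max (4 * Real.sqrt (ν * Real.log N * dExp w x) +
            4 * Real.sqrt (ν * Real.log N * dExp w y))
          (16 * η ^ 2) ≤ |dExp w x - dExp w y|}

end GRG

section Aux

open GRG

variable {N : ℕ}

/-- Schur test: nonnegative matrix with row sums `≤ R` and column sums `≤ C` has
`ℓ²` operator norm at most `√(R*C)`. -/
lemma schur_opNorm_le (M : Matrix (Fin N) (Fin N) ℝ) (R C : ℝ)
    (hR0 : 0 ≤ R) (hC0 : 0 ≤ C) (h0 : ∀ a b, 0 ≤ M a b)
    (hrow : ∀ a, ∑ b, M a b ≤ R) (hcol : ∀ b, ∑ a, M a b ≤ C) :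
    opNorm M ≤ Real.sqrt (R * C) := by
  rw [opNorm]
  apply ContinuousLinearMap.opNorm_le_bound _ (Real.sqrt_nonneg _)
  intro v
  have hTv : ∀ a, (Matrix.toEuclideanCLM (𝕜 := ℝ) M v) a = ∑ b, M a b * v b := by
    intro a
    have := congrFun (Matrix.ofLp_toEuclideanCLM (𝕜 := ℝ) M v) a
    simpa [Matrix.mulVec, dotProduct] using this
  have hnorm : ∀ (w : EuclideanSpace ℝ (Fin N)), ‖w‖ ^ 2 = ∑ i, w i ^ 2 := by
    intro w
    rw [EuclideanSpace.norm_eq, Real.sq_sqrt (by positivity)]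
    simp [sq_abs]
  have key : ‖Matrix.toEuclideanCLM (𝕜 := ℝ) M v‖ ^ 2 ≤ (R * C) * ‖v‖ ^ 2 := by
    rw [hnorm, hnorm]
    calc ∑ a, (Matrix.toEuclideanCLM (𝕜 := ℝ) M v) a ^ 2
        = ∑ a, (∑ b, M a b * v b) ^ 2 := by simp [hTv]
      _ ≤ ∑ a, R * (∑ b, M a b * v b ^ 2) := by
          apply Finset.sum_le_sum
          intro a _
          have cs : (∑ b, M a b * v b) ^ 2 ≤
              (∑ b, M a b) * (∑ b, M a b * v b ^ 2) := by
            have := Finset.sum_mul_sq_le_sq_mul_sq Finset.univ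
              (fun b => Real.sqrt (M a b)) (fun b => Real.sqrt (M a b) * v b)
            calc (∑ b, M a b * v b) ^ 2
                = (∑ b, Real.sqrt (M a b) * (Real.sqrt (M a b) * v b)) ^ 2 := by
                  congr 1; apply Finset.sum_congr rfl; intro b _
                  rw [← mul_assoc, Real.mul_self_sqrt (h0 a b)]
              _ ≤ (∑ b, Real.sqrt (M a b) ^ 2) *
                    (∑ b, (Real.sqrt (M a b) * v b) ^ 2) := this
              _ = (∑ b, M a b) * (∑ b, M a b * v b ^ 2) := by
                  congr 1
                  · apply Finset.sum_congr rfl; intro b _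
                    exact Real.sq_sqrt (h0 a b)
                  · apply Finset.sum_congr rfl; intro b _
                    rw [mul_pow, Real.sq_sqrt (h0 a b)]
          refine cs.trans (mul_le_mul_of_nonneg_right (hrow a) ?_)
          exact Finset.sum_nonneg fun b _ => mul_nonneg (h0 a b) (sq_nonneg _)
      _ = R * ∑ b, (∑ a, M a b) * v b ^ 2 := by
          rw [← Finset.mul_sum]
          congr 1
          rw [Finset.sum_comm]
          apply Finset.sum_congr rfl; intro b _
          rw [Finset.sum_mul]
      _ ≤ R * ∑ b, C * v b ^ 2 := by
          apply mul_le_mul_of_nonneg_left _ hR0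
          apply Finset.sum_le_sum
          intro b _
          exact mul_le_mul_of_nonneg_right (hcol b) (sq_nonneg _)
      _ = (R * C) * ∑ b, v b ^ 2 := by rw [← Finset.mul_sum]; ring
  calc ‖Matrix.toEuclideanCLM (𝕜 := ℝ) M v‖
      = Real.sqrt (‖Matrix.toEuclideanCLM (𝕜 := ℝ) M v‖ ^ 2) := by
        rw [Real.sqrt_sq (norm_nonneg _)]
    _ ≤ Real.sqrt ((R * C) * ‖v‖ ^ 2) := Real.sqrt_le_sqrt key
    _ = Real.sqrt (R * C) * ‖v‖ := by
        rw [Real.sqrt_mul (by positivity), Real.sqrt_sq (norm_nonneg _)]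

lemma adjPA_symm {G : SimpleGraph (Fin N)} {r : ℕ} {x y : Fin N}
    (h : AdjPA G.Adj r x y) : AdjPA G.Adj r y x := by
  obtain ⟨⟨ha, h1, h2⟩, h3, h4⟩ := h
  exact ⟨⟨ha.symm, h2, h1⟩, h4, h3⟩

lemma adjPA_ne {G : SimpleGraph (Fin N)} {r : ℕ} {x y : Fin N}
    (h : AdjPA G.Adj r x y) : x ≠ y :=
  G.ne_of_adj h.1.1

lemma precA_asymm {A : Fin N → Fin N → Prop} {x y : Fin N}
    (h : precA A x y) (h' : precA A y x) : False := by
  rcases h with h | ⟨h, h2⟩ <;> rcases h' with h' | ⟨h', h2'⟩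
  · exact absurd h' (lt_asymm h)
  · exact absurd h' (ne_of_gt h)
  · exact absurd h (ne_of_gt h')
  · exact absurd h2' (lt_asymm h2)

lemma precA_total (A : Fin N → Fin N → Prop) {x y : Fin N} (hne : x ≠ y) :
    precA A x y ∨ precA A y x := by
  rcases lt_trichotomy (degA A x) (degA A y) with h | h | h
  · exact Or.inl (Or.inl h)
  · rcases hne.lt_or_gt with h' | h'
    · exact Or.inr (Or.inr ⟨h.symm, h'⟩)
    · exact Or.inl (Or.inr ⟨h, h'⟩)
  · exact Or.inr (Or.inl h)

/-- In the pruned graph, each vertex has at most one `≺`-larger neighbour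
(no down-up paths). -/
lemma up_neighbor_unique {G : SimpleGraph (Fin N)} {r : ℕ} {a b₁ b₂ : Fin N}
    (h1 : AdjPA G.Adj r a b₁) (p1 : precA G.Adj a b₁)
    (h2 : AdjPA G.Adj r a b₂) (p2 : precA G.Adj a b₂) : b₁ = b₂ := by
  by_contra hne
  rcases precA_total G.Adj hne with h | h
  · exact h1.2.2 ⟨h1.1.1.symm, h1.1.2.2, p1, b₂, h2.1.1, h2.1.2.1, h⟩
  · exact h2.2.2 ⟨h2.1.1.symm, h2.1.2.2, p2, b₁, h1.1.1, h1.1.2.1, h⟩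

open Classical in
/-- The "up-edge" part of the pruned adjacency matrix outside high-degree vertices. -/
noncomputable def Lmat (G : SimpleGraph (Fin N)) (r : ℕ) (ξ : ℝ) :
    Matrix (Fin N) (Fin N) ℝ := fun a b =>
  if AdjPA G.Adj r a b ∧ precA G.Adj a b ∧ ¬ (ξ ≤ (degA G.Adj b : ℝ)) then 1 else 0

lemma term_eval (G : SimpleGraph (Fin N)) (r : ℕ) (x a b : Fin N) :
    Real.sqrt (degPmA G.Adj r x) * (vVecA G.Adj r 1 x a * vVecA G.Adj r 1 x b -
      vVecA G.Adj r (-1) x a * vVecA G.Adj r (-1) x b) =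
    indVec {x} a * indVec (S1pmA G.Adj r x) b +
      indVec (S1pmA G.Adj r x) a * indVec {x} b := by
  have h2 : (Real.sqrt 2)⁻¹ * (Real.sqrt 2)⁻¹ = 2⁻¹ := by
    rw [← mul_inv, Real.mul_self_sqrt (by norm_num : (0:ℝ) ≤ 2)]
  by_cases hd : degPmA G.Adj r x = 0
  · have hS : S1pmA G.Adj r x = ∅ := by
      rw [degPmA] at hd
      exact (Set.ncard_eq_zero (Set.toFinite _)).mp hd
    simp only [vVecA, hS, hd]
    simp [indVec]
  · have hd0 : (0:ℝ) < (degPmA G.Adj r x : ℝ) := by positivity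
    have hde : Real.sqrt (degPmA G.Adj r x) * (Real.sqrt (degPmA G.Adj r x))⁻¹ = 1 :=
      mul_inv_cancel₀ (ne_of_gt (Real.sqrt_pos.mpr hd0))
    simp only [vVecA]
    set q := (Real.sqrt 2)⁻¹
    set s := Real.sqrt (degPmA G.Adj r x : ℝ)
    set e := (s)⁻¹
    set ua := indVec {x} a
    set ub := indVec {x} b
    set Sa := indVec (S1pmA G.Adj r x) a
    set Sb := indVec (S1pmA G.Adj r x) b
    linear_combination (ua * Sb + Sa * ub) * (2 * q * q) * hde +
      2 * (ua * Sb + Sa * ub) * h2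

lemma Lmat_nonneg (G : SimpleGraph (Fin N)) (r : ℕ) (ξ : ℝ) (a b : Fin N) :
    0 ≤ Lmat G r ξ a b := by
  rw [Lmat]; split <;> norm_num

open Classical in
lemma Lmat_sum_eq_card (G : SimpleGraph (Fin N)) (r : ℕ) (ξ : ℝ)
    (s : Finset (Fin N)) (f : Fin N → Fin N × Fin N) :
    ∑ c ∈ s, Lmat G r ξ (f c).1 (f c).2 =
      ((s.filter fun c => AdjPA G.Adj r (f c).1 (f c).2 ∧ precA G.Adj (f c).1 (f c).2 ∧
        ¬ (ξ ≤ (degA G.Adj (f c).2 : ℝ))).card : ℝ) := by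
  rw [← Finset.sum_boole]
  apply Finset.sum_congr rfl
  intro c _
  rw [Lmat]

open Classical in
lemma Lmat_row_sum (G : SimpleGraph (Fin N)) (r : ℕ) (ξ : ℝ) (a : Fin N) :
    ∑ b, Lmat G r ξ a b ≤ 1 := by
  have h := Lmat_sum_eq_card G r ξ Finset.univ (fun b => (a, b))
  simp only at h
  rw [h]
  have hcard : (Finset.univ.filter fun b => AdjPA G.Adj r a b ∧ precA G.Adj a b ∧
      ¬ (ξ ≤ (degA G.Adj b : ℝ))).card ≤ 1 := by
    apply Finset.card_le_one.mpr
    intro b1 hb1 b2 hb2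
    simp only [Finset.mem_filter] at hb1 hb2
    exact up_neighbor_unique hb1.2.1 hb1.2.2.1 hb2.2.1 hb2.2.2.1
  exact_mod_cast hcard

open Classical in
lemma Lmat_col_sum (G : SimpleGraph (Fin N)) (r : ℕ) {ξ : ℝ} (hξ : 0 < ξ) (b : Fin N) :
    ∑ a, Lmat G r ξ a b ≤ ξ := by
  by_cases hb : ξ ≤ (degA G.Adj b : ℝ)
  · have hz : ∀ a, Lmat G r ξ a b = 0 := by
      intro a
      rw [Lmat, if_neg]
      rintro ⟨-, -, h⟩
      exact h hb
    simp only [hz, Finset.sum_const_zero]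
    exact hξ.le
  · have h := Lmat_sum_eq_card G r ξ Finset.univ (fun a => (a, b))
    simp only at h
    rw [h]
    have hdeg : degA G.Adj b = (Finset.univ.filter fun y => G.Adj b y).card := by
      rw [degA, ← Set.ncard_coe_finset]
      congr 1
      ext y
      simp
    have hcard : (Finset.univ.filter fun a => AdjPA G.Adj r a b ∧ precA G.Adj a b ∧
        ¬ (ξ ≤ (degA G.Adj b : ℝ))).card ≤ degA G.Adj b := by
      rw [hdeg]
      apply Finset.card_le_card
      intro a ha
      simp only [Finset.mem_filter, Finset.mem_univ, true_and] at ha ⊢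
      exact ha.1.1.1.symm
    calc ((Finset.univ.filter fun a => AdjPA G.Adj r a b ∧ precA G.Adj a b ∧
        ¬ (ξ ≤ (degA G.Adj b : ℝ))).card : ℝ) ≤ (degA G.Adj b : ℝ) := by exact_mod_cast hcard
      _ ≤ ξ := (not_le.mp hb).le

end Aux

open GRG in
/-- Norm of the pruned graph away from high-degree stars,
deterministic. For any finite simple graph `G` on `[N]` and any threshold `ξ > 0`,
`‖A^p − Σ_{x ∈ V^{(h)}} Σ_{σ = ±1} σ √(D_x^{p−}) v_σ(x) v_σ(x)*‖ ≤ 2√ξ`, where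
`V^{(h)} = {x : D_x ≥ ξ}`. -/
theorem norm_pruned_graph_low_degree
    (N : ℕ) (G : SimpleGraph (Fin N)) (r : ℕ) (hr : 6 ≤ r) (ξ : ℝ) (hξ : 0 < ξ) :
    opNorm (adjMatrixPA G.Adj r -
      ∑ x : Fin N, Set.indicator {x' : Fin N | ξ ≤ (degA G.Adj x' : ℝ)}
          (fun _ => (1 : ℝ)) x •
        (Real.sqrt (degPmA G.Adj r x) •
          (Matrix.vecMulVec (vVecA G.Adj r 1 x) (vVecA G.Adj r 1 x) -
            Matrix.vecMulVec (vVecA G.Adj r (-1) x) (vVecA G.Adj r (-1) x)))) ≤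
      2 * Real.sqrt ξ := by
  classical
  set c : Fin N → ℝ :=
    Set.indicator {x' : Fin N | ξ ≤ (degA G.Adj x' : ℝ)} (fun _ => (1 : ℝ)) with hc
  have hsum : ∀ a b : Fin N,
      (∑ x : Fin N, c x •
        (Real.sqrt (degPmA G.Adj r x) •
          (Matrix.vecMulVec (vVecA G.Adj r 1 x) (vVecA G.Adj r 1 x) -
            Matrix.vecMulVec (vVecA G.Adj r (-1) x) (vVecA G.Adj r (-1) x)))) a b
      = c a * indVec (S1pmA G.Adj r a) b + c b * indVec (S1pmA G.Adj r b) a := by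
    intro a b
    rw [Matrix.sum_apply]
    have hterm : ∀ x : Fin N,
        (c x • (Real.sqrt (degPmA G.Adj r x) •
          (Matrix.vecMulVec (vVecA G.Adj r 1 x) (vVecA G.Adj r 1 x) -
            Matrix.vecMulVec (vVecA G.Adj r (-1) x) (vVecA G.Adj r (-1) x)))) a b
        = c x * (indVec {x} a * indVec (S1pmA G.Adj r x) b) +
          c x * (indVec (S1pmA G.Adj r x) a * indVec {x} b) := by
      intro x
      simp only [Matrix.smul_apply, Matrix.sub_apply, Matrix.vecMulVec_apply, smul_eq_mul]
      rw [term_eval]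
      ring
    rw [Finset.sum_congr rfl fun x _ => hterm x, Finset.sum_add_distrib]
    congr 1
    · rw [Finset.sum_eq_single a]
      · simp [indVec]
      · intro x _ hx
        have : indVec {x} a = 0 :=
          Set.indicator_of_notMem (by simpa using (Ne.symm hx)) _
        rw [this]; ring
      · intro h; exact absurd (Finset.mem_univ a) h
    · rw [Finset.sum_eq_single b]
      · simp [indVec]
      · intro x _ hx
        have : indVec {x} b = 0 :=
          Set.indicator_of_notMem (by simpa using (Ne.symm hx)) _
        rw [this]; ring
      · intro h; exact absurd (Finset.mem_univ b) h
  have hentry : ∀ a b : Fin N,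
      adjMatrixPA G.Adj r a b -
        (c a * indVec (S1pmA G.Adj r a) b + c b * indVec (S1pmA G.Adj r b) a)
      = Lmat G r ξ a b + Lmat G r ξ b a := by
    intro a b
    by_cases hadj : AdjPA G.Adj r a b
    · have hne : a ≠ b := adjPA_ne hadj
      have hP : adjMatrixPA G.Adj r a b = 1 := if_pos hadj
      rcases precA_total G.Adj hne with hp | hp
      · have hSab : indVec (S1pmA G.Adj r a) b = 0 := by
          apply Set.indicator_of_notMem
          rintro ⟨-, h2⟩
          exact precA_asymm hp h2
        have hSba : indVec (S1pmA G.Adj r b) a = 1 := by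
          have hmem : a ∈ S1pmA G.Adj r b := ⟨adjPA_symm hadj, hp⟩
          rw [indVec, Set.indicator_of_mem hmem]
          rfl
        have hLba : Lmat G r ξ b a = 0 := by
          rw [Lmat, if_neg]
          rintro ⟨-, h2, -⟩
          exact precA_asymm hp h2
        by_cases hξb : ξ ≤ (degA G.Adj b : ℝ)
        · have hmemb : b ∈ {x' : Fin N | ξ ≤ (degA G.Adj x' : ℝ)} := hξb
          have hcb : c b = 1 := Set.indicator_of_mem hmemb _
          have hLab : Lmat G r ξ a b = 0 := by
            rw [Lmat, if_neg]
            rintro ⟨-, -, h3⟩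
            exact h3 hξb
          rw [hP, hSab, hSba, hcb, hLab, hLba]; ring
        · have hmemb : b ∉ {x' : Fin N | ξ ≤ (degA G.Adj x' : ℝ)} := hξb
          have hcb : c b = 0 := Set.indicator_of_notMem hmemb _
          have hLab : Lmat G r ξ a b = 1 := if_pos ⟨hadj, hp, hξb⟩
          rw [hP, hSab, hSba, hcb, hLab, hLba]; ring
      · have hSba : indVec (S1pmA G.Adj r b) a = 0 := by
          apply Set.indicator_of_notMem
          rintro ⟨-, h2⟩
          exact precA_asymm hp h2
        have hSab : indVec (S1pmA G.Adj r a) b = 1 := by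
          have hmem : b ∈ S1pmA G.Adj r a := ⟨hadj, hp⟩
          rw [indVec, Set.indicator_of_mem hmem]
          rfl
        have hLab : Lmat G r ξ a b = 0 := by
          rw [Lmat, if_neg]
          rintro ⟨-, h2, -⟩
          exact precA_asymm hp h2
        by_cases hξa : ξ ≤ (degA G.Adj a : ℝ)
        · have hmema : a ∈ {x' : Fin N | ξ ≤ (degA G.Adj x' : ℝ)} := hξa
          have hca : c a = 1 := Set.indicator_of_mem hmema _
          have hLba : Lmat G r ξ b a = 0 := by
            rw [Lmat, if_neg]
            rintro ⟨-, -, h3⟩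
            exact h3 hξa
          rw [hP, hSab, hSba, hca, hLab, hLba]; ring
        · have hmema : a ∉ {x' : Fin N | ξ ≤ (degA G.Adj x' : ℝ)} := hξa
          have hca : c a = 0 := Set.indicator_of_notMem hmema _
          have hLba : Lmat G r ξ b a = 1 := if_pos ⟨adjPA_symm hadj, hp, hξa⟩
          rw [hP, hSab, hSba, hca, hLab, hLba]; ring
    · have hP : adjMatrixPA G.Adj r a b = 0 := if_neg hadj
      have hSab : indVec (S1pmA G.Adj r a) b = 0 :=
        Set.indicator_of_notMem (fun h => hadj h.1) _
      have hSba : indVec (S1pmA G.Adj r b) a = 0 :=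
        Set.indicator_of_notMem (fun h => hadj (adjPA_symm h.1)) _
      have hLab : Lmat G r ξ a b = 0 := by
        rw [Lmat, if_neg]; rintro ⟨h1, -, -⟩; exact hadj h1
      have hLba : Lmat G r ξ b a = 0 := by
        rw [Lmat, if_neg]; rintro ⟨h1, -, -⟩; exact hadj (adjPA_symm h1)
      rw [hP, hSab, hSba, hLab, hLba]; ring
  have hM : adjMatrixPA G.Adj r -
      (∑ x : Fin N, c x •
        (Real.sqrt (degPmA G.Adj r x) •
          (Matrix.vecMulVec (vVecA G.Adj r 1 x) (vVecA G.Adj r 1 x) -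
            Matrix.vecMulVec (vVecA G.Adj r (-1) x) (vVecA G.Adj r (-1) x))))
      = Lmat G r ξ + (Lmat G r ξ).transpose := by
    ext a b
    rw [Matrix.sub_apply, hsum a b, Matrix.add_apply, Matrix.transpose_apply]
    exact hentry a b
  rw [hM]
  have hL : opNorm (Lmat G r ξ) ≤ Real.sqrt ξ := by
    have := schur_opNorm_le (Lmat G r ξ) 1 ξ zero_le_one hξ.le
      (Lmat_nonneg G r ξ) (Lmat_row_sum G r ξ) (Lmat_col_sum G r hξ)
    simpa using this
  have hLT : opNorm (Lmat G r ξ).transpose ≤ Real.sqrt ξ := by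
    have := schur_opNorm_le (Lmat G r ξ).transpose ξ 1 hξ.le zero_le_one
      (fun a b => Lmat_nonneg G r ξ b a)
      (fun a => Lmat_col_sum G r hξ a)
      (fun b => Lmat_row_sum G r ξ b)
    simpa using this
  calc opNorm (Lmat G r ξ + (Lmat G r ξ).transpose)
      ≤ opNorm (Lmat G r ξ) + opNorm (Lmat G r ξ).transpose := by
        rw [opNorm, opNorm, opNorm, map_add]
        exact norm_add_le _ _
    _ ≤ Real.sqrt ξ + Real.sqrt ξ := add_le_add hL hLT
    _ = 2 * Real.sqrt ξ := by ring
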